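/- arXiv:1912.11988 — 8 statements merged into one kernel-verified Lean document; each statement's English description precedes it below -/
import Mathlib

section
/- The maps η_X(x) = [x] (the open filter of open neighborhoods of x) and μ_X(α) = {A ∈ O(X) | φ(A) ∈ α} are natural transformations making (Φ, η, μ) a monad on the category of T0 topological spaces; in particular the monad laws μ ∘ Φμ = μ ∘ μΦ and μ ∘ ηΦ = id = μ ∘ Φη hold. -/
open Set TopologicalSpace

variable {X Y : Type*}

/-- An open filter on a topological space: a lattice-theoretic filter of the
frame of open sets (so it contains `univ` and satisfies
`A ∩ B ∈ v ↔ A ∈ v ∧ B ∈ v` for open `A`, `B`). -/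
def IsOpenFilter [TopologicalSpace X] (v : Set (Set X)) : Prop :=
  (∀ A ∈ v, IsOpen A) ∧ Set.univ ∈ v ∧
    ∀ A B : Set X, IsOpen A → IsOpen B → (A ∩ B ∈ v ↔ A ∈ v ∧ B ∈ v)

/-- `Φ(X)`: the set of open filters of `X`, ordered by inclusion. -/
abbrev OF (X : Type*) [TopologicalSpace X] := {v : Set (Set X) // IsOpenFilter v}

/-- The basic open sets `φ(A) = {v ∈ Φ(X) | A ∈ v}` of the filter space. -/
def phi [TopologicalSpace X] (A : Set X) : Set (OF X) := {v : OF X | A ∈ v.1}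

/-- The topology on `Φ(X)` generated by the sets `φ(A)`, `A` open. -/
instance OF.topologicalSpace (X : Type*) [TopologicalSpace X] : TopologicalSpace (OF X) :=
  generateFrom {S | ∃ A : Set X, IsOpen A ∧ S = phi A}

lemma isOpen_phi [TopologicalSpace X] {A : Set X} (hA : IsOpen A) : IsOpen (phi A) :=
  TopologicalSpace.GenerateOpen.basic _ ⟨A, hA, rfl⟩

lemma phi_univ [TopologicalSpace X] : phi (Set.univ : Set X) = Set.univ :=
  Set.eq_univ_of_forall fun v => v.2.2.1

lemma phi_inter [TopologicalSpace X] {A B : Set X} (hA : IsOpen A) (hB : IsOpen B) :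
    phi (A ∩ B) = phi A ∩ phi B :=
  Set.ext fun v => v.2.2.2 A B hA hB

/-- The open-neighborhood filter `[x]` of a point: the unit `η_X`. -/
def etaOF [TopologicalSpace X] (x : X) : OF X :=
  ⟨{A | IsOpen A ∧ x ∈ A}, fun _ hA => hA.1, ⟨isOpen_univ, mem_univ x⟩,
    fun A B hA hB =>
      ⟨fun h => ⟨⟨hA, h.2.1⟩, ⟨hB, h.2.2⟩⟩, fun h => ⟨hA.inter hB, h.1.2, h.2.2⟩⟩⟩

/-- The open filter `[S] = {B open | S ⊆ B}` of a subset `S`. -/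
def nbhdOF [TopologicalSpace X] (S : Set X) : OF X :=
  ⟨{B | IsOpen B ∧ S ⊆ B}, fun _ hA => hA.1, ⟨isOpen_univ, subset_univ S⟩,
    fun A B hA hB =>
      ⟨fun h => ⟨⟨hA, h.2.trans inter_subset_left⟩, ⟨hB, h.2.trans inter_subset_right⟩⟩,
       fun h => ⟨hA.inter hB, subset_inter h.1.2 h.2.2⟩⟩⟩

/-- The action of `Φ` on a continuous map: `Φ(f)(u) = {B open | f⁻¹(B) ∈ u}`. -/
def mapOF [TopologicalSpace X] [TopologicalSpace Y] (f : X → Y) (hf : Continuous f) :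
    OF X → OF Y := fun u =>
  ⟨{B | IsOpen B ∧ f ⁻¹' B ∈ u.1}, fun _ hA => hA.1,
    ⟨isOpen_univ, by simpa using u.2.2.1⟩,
    fun A B hA hB => by
      constructor
      · intro h
        have := (u.2.2.2 (f ⁻¹' A) (f ⁻¹' B) (hA.preimage hf) (hB.preimage hf)).1
          (by simpa [Set.preimage_inter] using h.2)
        exact ⟨⟨hA, this.1⟩, ⟨hB, this.2⟩⟩
      · intro h
        refine ⟨hA.inter hB, ?_⟩
        rw [Set.preimage_inter]
        exact (u.2.2.2 _ _ (hA.preimage hf) (hB.preimage hf)).2 ⟨h.1.2, h.2.2⟩⟩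

/-- The multiplication `μ_X(α) = {A open | φ(A) ∈ α}` of the open filter monad. -/
def muOF [TopologicalSpace X] : OF (OF X) → OF X := fun α =>
  ⟨{A | IsOpen A ∧ phi A ∈ α.1}, fun _ hA => hA.1,
    ⟨isOpen_univ, by rw [phi_univ]; exact α.2.2.1⟩,
    fun A B hA hB => by
      constructor
      · intro h
        have := (α.2.2.2 (phi A) (phi B) (isOpen_phi hA) (isOpen_phi hB)).1
          (by rw [← phi_inter hA hB]; exact h.2)
        exact ⟨⟨hA, this.1⟩, ⟨hB, this.2⟩⟩
      · intro h
        exact ⟨hA.inter hB, by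
          rw [phi_inter hA hB]
          exact (α.2.2.2 _ _ (isOpen_phi hA) (isOpen_phi hB)).2 ⟨h.1.2, h.2.2⟩⟩⟩

/- `Φf`, `η` and `μ` pull a basic open set `φ(A)` back to `φ(f⁻¹A)`, `A` and `φ(φ(A))`. Hence for each
law both sides contain an open `A` exactly when the argument contains one and the same set (for
associativity, `φ(φ(A))`), and open filters, consisting of open sets, are determined by their open members. -/

namespace OF

variable [TopologicalSpace X] [TopologicalSpace Y]

lemma mem_phi {A : Set X} {v : OF X} : v ∈ phi A ↔ A ∈ v.1 := Iff.rfl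

lemma ext_of_isOpen {u v : OF X} (h : ∀ A, IsOpen A → (A ∈ u.1 ↔ A ∈ v.1)) : u = v :=
  Subtype.ext <| Set.ext fun A =>
    ⟨fun hA => (h A (u.2.1 A hA)).1 hA, fun hA => (h A (v.2.1 A hA)).2 hA⟩

lemma mem_etaOF {x : X} {A : Set X} (hA : IsOpen A) : A ∈ (etaOF x).1 ↔ x ∈ A :=
  and_iff_right hA

lemma mem_mapOF {f : X → Y} (hf : Continuous f) {u : OF X} {B : Set Y} (hB : IsOpen B) :
    B ∈ (mapOF f hf u).1 ↔ f ⁻¹' B ∈ u.1 :=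
  and_iff_right hB

lemma mem_muOF {α : OF (OF X)} {A : Set X} (hA : IsOpen A) : A ∈ (muOF α).1 ↔ phi A ∈ α.1 :=
  and_iff_right hA

lemma etaOF_preimage_phi {A : Set X} (hA : IsOpen A) : (etaOF : X → OF X) ⁻¹' phi A = A :=
  Set.ext fun _ => mem_etaOF hA

lemma mapOF_preimage_phi {f : X → Y} (hf : Continuous f) {B : Set Y} (hB : IsOpen B) :
    mapOF f hf ⁻¹' phi B = phi (f ⁻¹' B) :=
  Set.ext fun _ => mem_mapOF hf hB

lemma muOF_preimage_phi {A : Set X} (hA : IsOpen A) :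
    (muOF : OF (OF X) → OF X) ⁻¹' phi A = phi (phi A) :=
  Set.ext fun _ => mem_muOF hA

lemma continuous_of_isOpen_preimage_phi {g : X → OF Y}
    (h : ∀ B : Set Y, IsOpen B → IsOpen (g ⁻¹' phi B)) : Continuous g :=
  continuous_generateFrom_iff.2 <| by
    rintro _ ⟨B, hB, rfl⟩
    exact h B hB

lemma continuous_etaOF : Continuous (etaOF : X → OF X) :=
  continuous_of_isOpen_preimage_phi fun _ hA => by rwa [etaOF_preimage_phi hA]

lemma continuous_mapOF {f : X → Y} (hf : Continuous f) : Continuous (mapOF f hf) :=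
  continuous_of_isOpen_preimage_phi fun _ hB => by
    rw [mapOF_preimage_phi hf hB]
    exact isOpen_phi (hB.preimage hf)

lemma continuous_muOF : Continuous (muOF : OF (OF X) → OF X) :=
  continuous_of_isOpen_preimage_phi fun _ hA => by
    rw [muOF_preimage_phi hA]
    exact isOpen_phi (isOpen_phi hA)

lemma mapOF_etaOF {f : X → Y} (hf : Continuous f) (x : X) :
    mapOF f hf (etaOF x) = etaOF (f x) :=
  ext_of_isOpen fun _ hB => by
    rw [mem_mapOF hf hB, mem_etaOF (hB.preimage hf), mem_etaOF hB, Set.mem_preimage]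

lemma mapOF_muOF {f : X → Y} (hf : Continuous f) (α : OF (OF X)) :
    mapOF f hf (muOF α) = muOF (mapOF (mapOF f hf) (continuous_mapOF hf) α) :=
  ext_of_isOpen fun _ hB => by
    rw [mem_mapOF hf hB, mem_muOF (hB.preimage hf), mem_muOF hB,
      mem_mapOF _ (isOpen_phi hB), mapOF_preimage_phi hf hB]

lemma muOF_mapOF_muOF (β : OF (OF (OF X))) :
    muOF (mapOF muOF continuous_muOF β) = muOF (muOF β) :=
  ext_of_isOpen fun _ hA => by
    rw [mem_muOF hA, mem_muOF hA, mem_mapOF _ (isOpen_phi hA), mem_muOF (isOpen_phi hA),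
      muOF_preimage_phi hA]

lemma muOF_etaOF (v : OF X) : muOF (etaOF v) = v :=
  ext_of_isOpen fun _ hA => by rw [mem_muOF hA, mem_etaOF (isOpen_phi hA), mem_phi]

lemma muOF_mapOF_etaOF (v : OF X) : muOF (mapOF etaOF continuous_etaOF v) = v :=
  ext_of_isOpen fun _ hA => by
    rw [mem_muOF hA, mem_mapOF _ (isOpen_phi hA), etaOF_preimage_phi hA]

end OF

universe u

open OF in
theorem openFilterMonad_general {X Y : Type u} [TopologicalSpace X] [TopologicalSpace Y]
    (f : X → Y) (hf : Continuous f) :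
    ∃ (hΦ : ∀ {Z W : Type u} [TopologicalSpace Z] [TopologicalSpace W]
        (g : Z → W) (hg : Continuous g), Continuous (mapOF g hg))
      (hη : ∀ (Z : Type u) [TopologicalSpace Z], Continuous (etaOF : Z → OF Z))
      (hμ : ∀ (Z : Type u) [TopologicalSpace Z], Continuous (muOF : OF (OF Z) → OF Z)),
      -- naturality of η
      (∀ x : X, mapOF f hf (etaOF x) = etaOF (f x)) ∧
      -- naturality of μ
      (∀ α : OF (OF X), mapOF f hf (muOF α) = muOF (mapOF (mapOF f hf) (hΦ f hf) α)) ∧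
      -- associativity law: μ ∘ Φμ = μ ∘ μΦ
      (∀ β : OF (OF (OF X)), muOF (mapOF muOF (hμ X) β) = muOF (muOF β)) ∧
      -- unit laws: μ ∘ ηΦ = id = μ ∘ Φη
      (∀ v : OF X, muOF (etaOF v) = v) ∧
      (∀ v : OF X, muOF (mapOF etaOF (hη X) v) = v) :=
  ⟨fun _ hg => continuous_mapOF hg, fun _ => continuous_etaOF, fun _ => continuous_muOF,
    mapOF_etaOF hf, mapOF_muOF hf, muOF_mapOF_muOF, muOF_etaOF, muOF_mapOF_etaOF⟩

/-- `η` and `μ` are (continuous) natural transformations and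
`(Φ, η, μ)` is a monad on `T0` spaces: the monad laws
`μ ∘ Φμ = μ ∘ μΦ` and `μ ∘ ηΦ = id = μ ∘ Φη` hold. -/
theorem openFilterMonad {X Y : Type u} [TopologicalSpace X] [TopologicalSpace Y]
    [T0Space X] [T0Space Y] (f : X → Y) (hf : Continuous f) :
    ∃ (hΦ : ∀ {Z W : Type u} [TopologicalSpace Z] [TopologicalSpace W]
        (g : Z → W) (hg : Continuous g), Continuous (mapOF g hg))
      (hη : ∀ (Z : Type u) [TopologicalSpace Z], Continuous (etaOF : Z → OF Z))
      (hμ : ∀ (Z : Type u) [TopologicalSpace Z], Continuous (muOF : OF (OF Z) → OF Z)),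
      -- naturality of η
      (∀ x : X, mapOF f hf (etaOF x) = etaOF (f x)) ∧
      -- naturality of μ
      (∀ α : OF (OF X), mapOF f hf (muOF α) = muOF (mapOF (mapOF f hf) (hΦ f hf) α)) ∧
      -- associativity law: μ ∘ Φμ = μ ∘ μΦ
      (∀ β : OF (OF (OF X)), muOF (mapOF muOF (hμ X) β) = muOF (muOF β)) ∧
      -- unit laws: μ ∘ ηΦ = id = μ ∘ Φη
      (∀ v : OF X, muOF (etaOF v) = v) ∧
      (∀ v : OF X, muOF (mapOF etaOF (hη X) v) = v) :=
  openFilterMonad_general f hf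
end

section
/- For an open filter v on a complete lattice X with its Scott topology, the set v↓ = ⋃_{A ∈ v} A↓, where A↓ = {y | A ⊆ ↑y}, is an ideal of X. -/
open Set TopologicalSpace

variable {X Y : Type*}

/-- An ideal of a poset: a nonempty directed lower set. -/
def IsIdeal [Preorder X] (I : Set X) : Prop :=
  I.Nonempty ∧ DirectedOn (· ≤ ·) I ∧ IsLowerSet I

/-- The way-below relation on a complete lattice:
`x ≪ y` iff every ideal whose sup dominates `y` contains `x`. -/
def wayBelow [CompleteLattice X] (x y : X) : Prop :=
  ∀ I : Set X, IsIdeal I → y ≤ sSup I → x ∈ I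

/-- A continuous lattice: every element is the sup of the elements way below it. -/
def IsContinuousLattice (X : Type*) [CompleteLattice X] : Prop :=
  ∀ x : X, x = sSup {y | wayBelow y x}

/-- The Scott topology on a complete lattice: open sets are the upper sets
inaccessible by sups of ideals. -/
instance scottTop (X : Type*) [CompleteLattice X] : TopologicalSpace X where
  IsOpen U := IsUpperSet U ∧ ∀ I : Set X, IsIdeal I → sSup I ∈ U → (I ∩ U).Nonempty
  isOpen_univ := ⟨isUpperSet_univ, fun I hI _ => hI.1.imp fun _ ha => ⟨ha, trivial⟩⟩
  isOpen_inter U V hU hV := ⟨hU.1.inter hV.1, fun I hI hs => by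
    obtain ⟨a, haI, haU⟩ := hU.2 I hI hs.1
    obtain ⟨b, hbI, hbV⟩ := hV.2 I hI hs.2
    obtain ⟨c, hcI, hac, hbc⟩ := hI.2.1 a haI b hbI
    exact ⟨c, hcI, hU.1 hac haU, hV.1 hbc hbV⟩⟩
  isOpen_sUnion S hS := ⟨isUpperSet_sUnion fun s hs => (hS s hs).1, fun I hI hm => by
    obtain ⟨U, hU, hsU⟩ := hm
    obtain ⟨a, haI, haU⟩ := (hS U hU).2 I hI hsU
    exact ⟨a, haI, U, hU, haU⟩⟩

/-- `v↓ = ⋃_{A ∈ v} A↓` where `A↓ = {y | A ⊆ ↑y}`. -/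
def downOf [CompleteLattice X] (v : Set (Set X)) : Set X :=
  {y | ∃ A ∈ v, A ⊆ Set.Ici y}

theorem IsOpenFilter.inter_mem [TopologicalSpace X] {v : Set (Set X)} (hv : IsOpenFilter v)
    {A B : Set X} (hA : A ∈ v) (hB : B ∈ v) : A ∩ B ∈ v :=
  (hv.2.2 A B (hv.1 A hA) (hv.1 B hB)).mpr ⟨hA, hB⟩

section downOf

variable [CompleteLattice X] {v : Set (Set X)}

theorem bot_mem_downOf {A : Set X} (hA : A ∈ v) : ⊥ ∈ downOf v :=
  ⟨A, hA, fun _ _ => bot_le⟩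

theorem isLowerSet_downOf (v : Set (Set X)) : IsLowerSet (downOf v) := by
  rintro a b hba ⟨A, hA, hAa⟩
  exact ⟨A, hA, fun x hx => hba.trans (hAa hx)⟩

theorem sup_mem_downOf (hv : ∀ A ∈ v, ∀ B ∈ v, A ∩ B ∈ v) {y z : X}
    (hy : y ∈ downOf v) (hz : z ∈ downOf v) : y ⊔ z ∈ downOf v := by
  obtain ⟨A, hA, hAy⟩ := hy
  obtain ⟨B, hB, hBz⟩ := hz
  exact ⟨A ∩ B, hv A hA B hB, fun x hx => sup_le (hAy hx.1) (hBz hx.2)⟩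

theorem directedOn_downOf (hv : ∀ A ∈ v, ∀ B ∈ v, A ∩ B ∈ v) :
    DirectedOn (· ≤ ·) (downOf v) := fun y hy z hz =>
  ⟨y ⊔ z, sup_mem_downOf hv hy hz, le_sup_left, le_sup_right⟩

end downOf

/-- for an open filter `v` on a complete lattice with its Scott
topology, `v↓` is an ideal. -/
theorem downOf_isIdeal [CompleteLattice X] (v : Set (Set X)) (hv : IsOpenFilter v) :
    IsIdeal (downOf v) :=
  ⟨⟨⊥, bot_mem_downOf hv.2.1⟩,
    directedOn_downOf fun _ hA _ hB => hv.inter_mem hA hB,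
    isLowerSet_downOf v⟩
end

section
/- A complete lattice X is a continuous lattice if and only if for every x ∈ X, x = ⋁ [x]↓, where [x] is the Scott-open neighborhood filter of x and [x]↓ = ⋃_{A ∈ [x]} {y | A ⊆ ↑y}. -/
open Set TopologicalSpace

variable {X Y : Type*}

/-! In a continuous lattice the way-below relation interpolates, so for `y ≪ x` there is `b`
with `y ≪ b ≪ x`, and `{w | b ≪ w}` is a Scott-open neighbourhood of `x` inside `↑y`.
Conversely, a Scott-open `A ∋ x` with `A ⊆ ↑y` forces `y ≪ x`: an ideal whose sup lies
above `x` has its sup in `A`, hence meets `A`, hence contains `y`. So in a continuous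
lattice `[x]↓` is exactly `{y | y ≪ x}`, and in general it is contained in it. -/

section WayBelow

variable [CompleteLattice X] {a b x y z : X}

lemma isIdeal_Iic (x : X) : IsIdeal (Iic x) :=
  ⟨nonempty_Iic, fun _ ha _ hb => ⟨x, le_rfl, ha, hb⟩, fun _ _ hba ha => hba.trans ha⟩

lemma wayBelow_le (h : wayBelow y x) : y ≤ x :=
  h (Iic x) (isIdeal_Iic x) (le_sSup le_rfl)

lemma wayBelow_of_le_of_wayBelow (hzy : z ≤ y) (h : wayBelow y x) : wayBelow z x :=
  fun I hI hx => hI.2.2 hzy (h I hI hx)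

lemma wayBelow_of_wayBelow_of_le (h : wayBelow y x) (hxz : x ≤ z) : wayBelow y z :=
  fun I hI hz => h I hI (hxz.trans hz)

lemma bot_wayBelow (x : X) : wayBelow ⊥ x := fun _ hI _ =>
  let ⟨_, ha⟩ := hI.1
  hI.2.2 bot_le ha

lemma sup_wayBelow (ha : wayBelow a x) (hb : wayBelow b x) : wayBelow (a ⊔ b) x := by
  intro I hI hx
  obtain ⟨c, hcI, hac, hbc⟩ := hI.2.1 a (ha I hI hx) b (hb I hI hx)
  exact hI.2.2 (sup_le hac hbc) hcI

lemma sSup_setOf_wayBelow_le (x : X) : sSup {y | wayBelow y x} ≤ x :=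
  sSup_le fun _ => wayBelow_le

lemma IsContinuousLattice.exists_wayBelow_wayBelow (hc : IsContinuousLattice X)
    (h : wayBelow z x) : ∃ b, wayBelow z b ∧ wayBelow b x := by
  let D : Set X := {a | ∃ b, wayBelow a b ∧ wayBelow b x}
  have hD : IsIdeal D := by
    refine ⟨⟨⊥, ⊥, bot_wayBelow ⊥, bot_wayBelow x⟩, ?_, ?_⟩
    · rintro a ⟨b₁, hab₁, hb₁⟩ a' ⟨b₂, hab₂, hb₂⟩
      exact ⟨a ⊔ a', ⟨b₁ ⊔ b₂, sup_wayBelow (wayBelow_of_wayBelow_of_le hab₁ le_sup_left)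
        (wayBelow_of_wayBelow_of_le hab₂ le_sup_right), sup_wayBelow hb₁ hb₂⟩,
        le_sup_left, le_sup_right⟩
    · rintro a a' ha'a ⟨b, hab, hb⟩
      exact ⟨b, wayBelow_of_le_of_wayBelow ha'a hab, hb⟩
  have hxD : x ≤ sSup D := by
    rw [hc x]
    refine sSup_le fun b hb => ?_
    rw [hc b]
    exact sSup_le_sSup fun a ha => ⟨b, ha, hb⟩
  exact h D hD hxD

lemma IsContinuousLattice.isOpen_setOf_wayBelow (hc : IsContinuousLattice X) (z : X) :
    IsOpen {w | wayBelow z w} := by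
  refine ⟨fun _ _ hab ha => wayBelow_of_wayBelow_of_le ha hab, fun I hI hz => ?_⟩
  obtain ⟨b, hzb, hbI⟩ := hc.exists_wayBelow_wayBelow hz
  exact ⟨b, hbI I hI le_rfl, hzb⟩

lemma downOf_nhds_subset_setOf_wayBelow (x : X) :
    downOf {A : Set X | IsOpen A ∧ x ∈ A} ⊆ {y | wayBelow y x} := by
  rintro y ⟨A, ⟨⟨hAup, hA⟩, hxA⟩, hAy⟩ I hI hxI
  obtain ⟨a, haI, haA⟩ := hA I hI (hAup hxI hxA)
  exact hI.2.2 (hAy haA) haI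

lemma IsContinuousLattice.downOf_nhds_eq_setOf_wayBelow (hc : IsContinuousLattice X) (x : X) :
    downOf {A : Set X | IsOpen A ∧ x ∈ A} = {y | wayBelow y x} := by
  refine (downOf_nhds_subset_setOf_wayBelow x).antisymm fun y hy => ?_
  obtain ⟨b, hyb, hbx⟩ := hc.exists_wayBelow_wayBelow hy
  exact ⟨{w | wayBelow b w}, ⟨hc.isOpen_setOf_wayBelow b, hbx⟩,
    fun w hbw => (wayBelow_le hyb).trans (wayBelow_le hbw)⟩

end WayBelow

/-- a complete lattice is continuous iff `x = ⋁ [x]↓` for every `x`,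
where `[x]` is the Scott-open neighborhood filter of `x`. -/
theorem isContinuousLattice_iff_sSup_downOf_nhds [CompleteLattice X] :
    IsContinuousLattice X ↔
      ∀ x : X, x = sSup (downOf {A : Set X | IsOpen A ∧ x ∈ A}) := by
  refine ⟨fun hc x => ?_, fun h x => ?_⟩
  · rw [hc.downOf_nhds_eq_setOf_wayBelow x]
    exact hc x
  · refine le_antisymm ?_ (sSup_setOf_wayBelow_le x)
    calc x = sSup (downOf {A : Set X | IsOpen A ∧ x ∈ A}) := h x
      _ ≤ sSup {y | wayBelow y x} := sSup_le_sSup (downOf_nhds_subset_setOf_wayBelow x)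
end

section
/- Let X be a continuous lattice with Scott topology and r : Φ(X) → X defined by r(v) = ⋁ v↓. Then for every Scott-open set A, r⁻¹(A) ⊆ φ(A). -/
open Set TopologicalSpace

variable {X Y : Type*}

/-! The sets `{y | B ⊆ ↑y}` for `B ∈ v` are directed because `v` is closed under binary
intersections, so `v↓` is an ideal. If its supremum lies in the Scott-open set `A`, Scott-openness
puts some `y ∈ v↓` in `A`; the witness `B ∈ v` of `y ∈ v↓` satisfies `B ⊆ ↑y ⊆ A`, and an open
filter is upward closed among open sets, so `A ∈ v`. -/

theorem isIdeal_downOf [CompleteLattice X] {v : Set (Set X)} (hne : v.Nonempty)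
    (hinter : ∀ B ∈ v, ∀ C ∈ v, B ∩ C ∈ v) : IsIdeal (downOf v) := by
  obtain ⟨B₀, hB₀⟩ := hne
  refine ⟨⟨⊥, B₀, hB₀, fun x _ => bot_le⟩, ?_, ?_⟩
  · rintro a ⟨B, hB, hBa⟩ b ⟨C, hC, hCb⟩
    exact ⟨a ⊔ b, ⟨B ∩ C, hinter B hB C hC, fun x hx => sup_le (hBa hx.1) (hCb hx.2)⟩,
      le_sup_left, le_sup_right⟩
  · rintro a b hba ⟨B, hB, hBa⟩
    exact ⟨B, hB, fun x hx => hba.trans (hBa hx)⟩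

namespace IsOpenFilter

variable [TopologicalSpace X] {v : Set (Set X)}

theorem inter_mem_s8 (hv : IsOpenFilter v) {B C : Set X} (hB : B ∈ v) (hC : C ∈ v) :
    B ∩ C ∈ v :=
  (hv.2.2 B C (hv.1 B hB) (hv.1 C hC)).2 ⟨hB, hC⟩

theorem mem_of_subset (hv : IsOpenFilter v) {B C : Set X} (hB : B ∈ v) (hC : IsOpen C)
    (hBC : B ⊆ C) : C ∈ v :=
  ((hv.2.2 C B hC (hv.1 B hB)).1 (by rwa [inter_eq_self_of_subset_right hBC])).1

theorem isIdeal_downOf [CompleteLattice X] (hv : IsOpenFilter v) : IsIdeal (downOf v) :=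
  _root_.isIdeal_downOf ⟨univ, hv.2.1⟩ fun _ hB _ hC => hv.inter_mem_s8 hB hC

end IsOpenFilter

theorem exists_mem_subset_of_sSup_downOf_mem [CompleteLattice X] {v : Set (Set X)}
    (hv : IsIdeal (downOf v)) {U : Set X} (hU : IsOpen U) (hsup : sSup (downOf v) ∈ U) :
    ∃ B ∈ v, B ⊆ U := by
  obtain ⟨y, ⟨B, hB, hBy⟩, hyU⟩ := hU.2 _ hv hsup
  exact ⟨B, hB, fun x hx => hU.1 (hBy hx) hyU⟩

theorem preimage_r_subset_phi_general [CompleteLattice X]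
    (A : Set X) (hA : IsOpen A) :
    (fun v : OF X => sSup (downOf v.1)) ⁻¹' A ⊆ phi A := by
  intro v hv
  obtain ⟨B, hB, hBA⟩ := exists_mem_subset_of_sSup_downOf_mem v.2.isIdeal_downOf hA hv
  exact v.2.mem_of_subset hB hA hBA

/-- for a continuous lattice with the Scott topology and
`r(v) = ⋁ v↓`, one has `r⁻¹(A) ⊆ φ(A)` for every Scott-open `A`. -/
theorem preimage_r_subset_phi [CompleteLattice X] (h : IsContinuousLattice X)
    (A : Set X) (hA : IsOpen A) :
    (fun v : OF X => sSup (downOf v.1)) ⁻¹' A ⊆ phi A :=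
  preimage_r_subset_phi_general A hA
end

section
/- Let X be a continuous lattice with Scott topology and r(v) = ⋁ v↓ for open filters v. For every Scott-open set A and every x ∈ X with x ≪ ⋀A, one has φ(A) ⊆ r⁻¹(⇑x), where ⇑x = {y | x ≪ y}. -/
open Set TopologicalSpace

variable {X Y : Type*}

theorem wayBelow.trans_le [CompleteLattice X] {x y z : X} (hxy : wayBelow x y) (hyz : y ≤ z) :
    wayBelow x z :=
  fun I hI hz => hxy I hI (hyz.trans hz)

theorem sInf_mem_downOf [CompleteLattice X] {v : Set (Set X)} {A : Set X} (hA : A ∈ v) :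
    sInf A ∈ downOf v :=
  ⟨A, hA, fun _ ha => sInf_le ha⟩

theorem phi_subset_preimage_wayUp_general [CompleteLattice X]
    (A : Set X) (x : X) (hx : wayBelow x (sInf A)) :
    phi A ⊆ (fun v : OF X => sSup (downOf v.1)) ⁻¹' {y : X | wayBelow x y} :=
  fun _ hv => hx.trans_le (le_sSup (sInf_mem_downOf hv))

/-- for a continuous lattice with `r(v) = ⋁ v↓`, if `A` is Scott open
and `x ≪ ⋀A`, then `φ(A) ⊆ r⁻¹(⇑x)`. -/
theorem phi_subset_preimage_wayUp [CompleteLattice X] (h : IsContinuousLattice X)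
    (A : Set X) (hA : IsOpen A) (x : X) (hx : wayBelow x (sInf A)) :
    phi A ⊆ (fun v : OF X => sSup (downOf v.1)) ⁻¹' {y : X | wayBelow x y} :=
  phi_subset_preimage_wayUp_general A x hx
end

section
/- Let (X, r) be a Φ-algebra over T0 spaces. Then X with the specialization order is a complete lattice, in which the infimum of any subset A ⊆ X is r([A]), where [A] = {B open | A ⊆ B}. -/
open Set TopologicalSpace

variable {X Y : Type*}

/-- The specialization (pre)order of a topological space:
`x ≤ y` iff every open set containing `x` contains `y`. -/
def sOrd [TopologicalSpace X] (x y : X) : Prop :=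
  ∀ A : Set X, IsOpen A → x ∈ A → y ∈ A

/-!
The opens of `Φ(X)` are upward closed for inclusion, because the subbasic opens `φ(A)` are;
hence any continuous `r : Φ(X) → X` is monotone from inclusion to the specialization order.
For `x ∈ A` we have `[A] ⊆ [x]`, and for every lower bound `y` of `A` we have `[y] ⊆ [A]`;
applying `r` and `r([x]) = x` shows that `r([A])` is the greatest lower bound of `A`.
-/

lemma sOrd_iff_specializes [TopologicalSpace X] {x y : X} : sOrd x y ↔ y ⤳ x :=
  specializes_iff_forall_open.symm

namespace OF

variable [TopologicalSpace X]

lemma isUpperSet_of_isOpen {U : Set (OF X)} (hU : IsOpen U) : IsUpperSet U := by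
  induction hU with
  | basic S hS =>
      obtain ⟨A, -, rfl⟩ := hS
      exact fun _ _ huv hu => huv hu
  | univ => exact isUpperSet_univ
  | inter S T _ _ hS hT => exact hS.inter hT
  | sUnion S _ ih => exact isUpperSet_sUnion ih

lemma specializes_of_le {u v : OF X} (h : u ≤ v) : v ⤳ u :=
  specializes_iff_forall_open.2 fun _ hU hu => isUpperSet_of_isOpen hU h hu

lemma nbhdOF_le_etaOF {A : Set X} {x : X} (hx : x ∈ A) : nbhdOF A ≤ etaOF x :=
  fun _ hB => ⟨hB.1, hB.2 hx⟩

lemma etaOF_le_nbhdOF {A : Set X} {y : X} (hy : ∀ x ∈ A, sOrd y x) : etaOF y ≤ nbhdOF A :=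
  fun B hB => ⟨hB.1, fun x hx => hy x hx B hB.1 hB.2⟩

end OF

lemma Continuous.sOrd_of_le [TopologicalSpace X] {r : OF X → X} (hc : Continuous r)
    {u v : OF X} (h : u ≤ v) : sOrd (r u) (r v) :=
  sOrd_iff_specializes.2 ((OF.specializes_of_le h).map hc)

theorem specialization_completeLattice_general [TopologicalSpace X] [T0Space X]
    (r : OF X → X) (hc : Continuous r)
    (hunit : ∀ x : X, r (etaOF x) = x) :
    (∀ x y : X, sOrd x y → sOrd y x → x = y) ∧
    ∀ A : Set X,
      (∀ x ∈ A, sOrd (r (nbhdOF A)) x) ∧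
      ∀ y : X, (∀ x ∈ A, sOrd y x) → sOrd y (r (nbhdOF A)) := by
  refine ⟨fun x y hxy hyx => ?_, fun A => ⟨fun x hx => ?_, fun y hy => ?_⟩⟩
  · exact ((sOrd_iff_specializes.1 hyx).antisymm (sOrd_iff_specializes.1 hxy)).eq
  · simpa only [hunit] using hc.sOrd_of_le (OF.nbhdOF_le_etaOF hx)
  · simpa only [hunit] using hc.sOrd_of_le (OF.etaOF_le_nbhdOF hy)

/-- for a `Φ`-algebra `(X, r)` over `T0` spaces, the specialization
order is a partial order in which every subset `A` has the greatest lower bound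
`r([A])`; hence `X` is a complete lattice with `⋀A = r([A])`. -/
theorem specialization_completeLattice [TopologicalSpace X] [T0Space X]
    (r : OF X → X) (hc : Continuous r)
    (hunit : ∀ x : X, r (etaOF x) = x)
    (hassoc : ∀ α : OF (OF X), r (mapOF r hc α) = r (muOF α)) :
    (∀ x y : X, sOrd x y → sOrd y x → x = y) ∧
    ∀ A : Set X,
      (∀ x ∈ A, sOrd (r (nbhdOF A)) x) ∧
      ∀ y : X, (∀ x ∈ A, sOrd y x) → sOrd y (r (nbhdOF A)) :=
  specialization_completeLattice_general r hc hunit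
end

section
/- For a directed family 𝒜 of open filters of a T0 space X, the collection 𝒜~ = {W open in Φ(X) | 𝒜 ∩ W ≠ ∅} is an open filter on the space Φ(X), and μ_X(𝒜~) = ⋃𝒜 (the directed supremum of 𝒜 in Φ(X)). -/
open Set TopologicalSpace

variable {X Y : Type*}

/-!
Open sets of `Φ(X)` are upper sets, so two members of `𝒜` witnessing `W₁` and `W₂` can be
replaced by a common upper bound in `𝒜` witnessing `W₁ ∩ W₂`. The multiplication only tests
the basic opens `φ(A)`, and `φ(A)` meets `𝒜` exactly when `A` belongs to some member of `𝒜`.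
-/

lemma OF.isUpperSet_of_isOpen_s16 [TopologicalSpace X] {W : Set (OF X)} (hW : IsOpen W) :
    IsUpperSet W := by
  induction hW with
  | basic S hS =>
    obtain ⟨A, -, rfl⟩ := hS
    exact fun v w hvw hv => hvw hv
  | univ => exact isUpperSet_univ
  | inter S T _ _ ihS ihT => exact ihS.inter ihT
  | sUnion 𝒮 _ ih => exact isUpperSet_sUnion ih

lemma isOpenFilter_setOf_isOpen_inter_nonempty [TopologicalSpace Y] [Preorder Y]
    (hup : ∀ W : Set Y, IsOpen W → IsUpperSet W) {𝒜 : Set Y} (hne : 𝒜.Nonempty)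
    (hdir : DirectedOn (· ≤ ·) 𝒜) :
    IsOpenFilter {W : Set Y | IsOpen W ∧ (𝒜 ∩ W).Nonempty} := by
  refine ⟨fun W hW => hW.1, ⟨isOpen_univ, by simpa using hne⟩, fun A B hA hB => ⟨?_, ?_⟩⟩
  · rintro ⟨-, v, hv𝒜, hvA, hvB⟩
    exact ⟨⟨hA, v, hv𝒜, hvA⟩, hB, v, hv𝒜, hvB⟩
  · rintro ⟨⟨-, v, hv𝒜, hvA⟩, -, w, hw𝒜, hwB⟩
    obtain ⟨u, hu𝒜, hvu, hwu⟩ := hdir v hv𝒜 w hw𝒜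
    exact ⟨hA.inter hB, u, hu𝒜, hup A hA hvu hvA, hup B hB hwu hwB⟩

lemma muOF_val_eq_biUnion [TopologicalSpace X] (𝒜 : Set (OF X))
    (h : IsOpenFilter {W : Set (OF X) | IsOpen W ∧ (𝒜 ∩ W).Nonempty}) :
    (muOF (⟨_, h⟩ : OF (OF X))).1 = ⋃ v ∈ 𝒜, v.1 := by
  ext A
  simp only [muOF, mem_ofPred_eq, mem_iUnion, exists_prop]
  constructor
  · rintro ⟨-, -, v, hv𝒜, hvA⟩
    exact ⟨v, hv𝒜, hvA⟩
  · rintro ⟨v, hv𝒜, hvA⟩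
    exact ⟨v.2.1 A hvA, isOpen_phi (v.2.1 A hvA), v, hv𝒜, hvA⟩

theorem tilde_openFilter_mu_general [TopologicalSpace X]
    (𝒜 : Set (OF X)) (hne : 𝒜.Nonempty) (hdir : DirectedOn (· ≤ ·) 𝒜) :
    ∃ h : IsOpenFilter {W : Set (OF X) | IsOpen W ∧ (𝒜 ∩ W).Nonempty},
      (muOF (⟨{W : Set (OF X) | IsOpen W ∧ (𝒜 ∩ W).Nonempty}, h⟩ : OF (OF X))).1 =
        ⋃ v ∈ 𝒜, v.1 :=
  ⟨isOpenFilter_setOf_isOpen_inter_nonempty (fun _ => OF.isUpperSet_of_isOpen_s16) hne hdir,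
    muOF_val_eq_biUnion 𝒜 _⟩

/-- for a directed family `𝒜` of open filters of a `T0` space,
`𝒜~ = {W open in Φ(X) | 𝒜 ∩ W ≠ ∅}` is an open filter on `Φ(X)` and
`μ_X(𝒜~) = ⋃𝒜`. -/
theorem tilde_openFilter_mu [TopologicalSpace X] [T0Space X]
    (𝒜 : Set (OF X)) (hne : 𝒜.Nonempty) (hdir : DirectedOn (· ≤ ·) 𝒜) :
    ∃ h : IsOpenFilter {W : Set (OF X) | IsOpen W ∧ (𝒜 ∩ W).Nonempty},
      (muOF (⟨{W : Set (OF X) | IsOpen W ∧ (𝒜 ∩ W).Nonempty}, h⟩ : OF (OF X))).1 =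
        ⋃ v ∈ 𝒜, v.1 :=
  tilde_openFilter_mu_general 𝒜 hne hdir
end

section
/- Let (X, r) be a Φ-algebra over T0 spaces. Then for every open filter v, r(v) = ⋁ v↓ (supremum in the specialization order), where v↓ = ⋃_{A∈v} {y | A ⊆ ↑y}; consequently X with the specialization order is a continuous lattice. -/
open Set TopologicalSpace

variable {X Y : Type*}

/-- `v↓` relative to the specialization order:
`{y | ∃ A ∈ v, A ⊆ ↑y}` where `↑y = {z | y ≤ z}` in the specialization order. -/
def sDownOf [TopologicalSpace X] (v : Set (Set X)) : Set X :=
  {y | ∃ A ∈ v, ∀ z ∈ A, sOrd y z}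

/-- Least upper bound relative to the specialization order. -/
def sIsLUB [TopologicalSpace X] (S : Set X) (s : X) : Prop :=
  (∀ x ∈ S, sOrd x s) ∧ ∀ y : X, (∀ x ∈ S, sOrd x y) → sOrd s y

/-- Ideal relative to the specialization order. -/
def sIdeal [TopologicalSpace X] (I : Set X) : Prop :=
  I.Nonempty ∧ (∀ a ∈ I, ∀ b ∈ I, ∃ c ∈ I, sOrd a c ∧ sOrd b c) ∧
    ∀ a b : X, sOrd a b → b ∈ I → a ∈ I

/-- Way-below relative to the specialization order. -/
def sWayBelow [TopologicalSpace X] (x y : X) : Prop :=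
  ∀ I : Set X, sIdeal I → ∀ s : X, sIsLUB I s → sOrd y s → x ∈ I

/-!
Continuity of `r` and the unit law give the two basic facts: `r` is monotone for inclusion of
open filters, and an open set containing `r v` belongs to `v`. Every `y ∈ v↓` has `[y] ⊆ v`,
so `y ≤ r v`. Conversely, `v = μ(α)` for the filter `α` on `Φ(X)` generated by the `φ(A)`,
`A ∈ v`; every `r [A]` with `A ∈ v` lies in `v↓`, so `Φ(r)(α) ⊆ [u]` for any upper bound `u`
of `v↓`, and associativity yields `r v = r (μ α) = r (Φ(r) α) ≤ u`.
For `x ∈ X` apply this to `v = [x]`: each `y ∈ [x]↓` is way below `x`, because for an ideal `I`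
with `x ≤ ⋁ I` the open sets meeting `I` form an open filter `w` with `⋁ I ≤ r w`, so an open
`A ∋ x` with `A ⊆ ↑y` contains `r w`, hence belongs to `w`, hence meets `I` above `y`.
-/

section OpenFilter

variable [TopologicalSpace X]

lemma OF.mem_of_subset (v : OF X) {A B : Set X} (hA : A ∈ v.1) (hB : IsOpen B)
    (hAB : A ⊆ B) : B ∈ v.1 := by
  have h : A ∩ B ∈ v.1 := by rwa [inter_eq_left.mpr hAB]
  exact ((v.2.2.2 A B (v.2.1 A hA) hB).1 h).2

lemma OF.exists_mem_phi_subset {U : Set (OF X)} (hU : IsOpen U) :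
    ∀ v ∈ U, ∃ B : Set X, IsOpen B ∧ B ∈ v.1 ∧ phi B ⊆ U := by
  induction hU with
  | basic S hS =>
    obtain ⟨A, hA, rfl⟩ := hS
    exact fun v hv => ⟨A, hA, hv, subset_rfl⟩
  | univ => exact fun v _ => ⟨univ, isOpen_univ, v.2.2.1, subset_univ _⟩
  | inter U V _ _ ihU ihV =>
    rintro v ⟨hvU, hvV⟩
    obtain ⟨B, hB, hBv, hBU⟩ := ihU v hvU
    obtain ⟨C, hC, hCv, hCV⟩ := ihV v hvV
    refine ⟨B ∩ C, hB.inter hC, (v.2.2.2 B C hB hC).2 ⟨hBv, hCv⟩, ?_⟩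
    rw [phi_inter hB hC]
    exact inter_subset_inter hBU hCV
  | sUnion S _ ih =>
    rintro v ⟨U, hUS, hvU⟩
    obtain ⟨B, hB, hBv, hBU⟩ := ih U hUS v hvU
    exact ⟨B, hB, hBv, hBU.trans (subset_sUnion_of_mem hUS)⟩

def phiFilter (v : OF X) : OF (OF X) :=
  ⟨{U | IsOpen U ∧ ∃ A ∈ v.1, phi A ⊆ U}, fun _ h => h.1,
   ⟨isOpen_univ, univ, v.2.2.1, subset_univ _⟩,
   fun U V hU hV =>
     ⟨fun ⟨_, A, hAv, hAUV⟩ =>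
        ⟨⟨hU, A, hAv, hAUV.trans inter_subset_left⟩,
         ⟨hV, A, hAv, hAUV.trans inter_subset_right⟩⟩,
      fun ⟨⟨_, A, hAv, hAU⟩, ⟨_, B, hBv, hBV⟩⟩ => by
        have hA := v.2.1 A hAv
        have hB := v.2.1 B hBv
        refine ⟨hU.inter hV, A ∩ B, (v.2.2.2 A B hA hB).2 ⟨hAv, hBv⟩, ?_⟩
        rw [phi_inter hA hB]
        exact inter_subset_inter hAU hBV⟩⟩

lemma muOF_phiFilter (v : OF X) : muOF (phiFilter v) = v := by
  refine Subtype.ext (Set.ext fun A => ⟨?_, fun hAv => ?_⟩)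
  · rintro ⟨hA, _, B, hBv, hBA⟩
    have hB : IsOpen B := v.2.1 B hBv
    exact v.mem_of_subset hBv hA (hBA (show nbhdOF B ∈ phi B from ⟨hB, subset_rfl⟩)).2
  · have hA : IsOpen A := v.2.1 A hAv
    exact ⟨hA, isOpen_phi hA, A, hAv, subset_rfl⟩

def meetFilter (I : Set X) (hne : I.Nonempty)
    (hdir : ∀ a ∈ I, ∀ b ∈ I, ∃ c ∈ I, sOrd a c ∧ sOrd b c) : OF X :=
  ⟨{B | IsOpen B ∧ (I ∩ B).Nonempty}, fun _ h => h.1,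
   ⟨isOpen_univ, hne.imp fun a ha => ⟨ha, trivial⟩⟩,
   fun A B hA hB =>
     ⟨fun ⟨_, z, hzI, hzA, hzB⟩ => ⟨⟨hA, z, hzI, hzA⟩, ⟨hB, z, hzI, hzB⟩⟩,
      fun ⟨⟨_, a, haI, haA⟩, ⟨_, b, hbI, hbB⟩⟩ => by
        obtain ⟨c, hcI, hac, hbc⟩ := hdir a haI b hbI
        exact ⟨hA.inter hB, c, hcI, hac A hA haA, hbc B hB hbB⟩⟩⟩

lemma sOrd_of_sWayBelow {x y : X} (h : sWayBelow y x) : sOrd y x := by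
  have hIdeal : sIdeal {z : X | sOrd z x} :=
    ⟨⟨x, fun _ _ h => h⟩, fun _ ha _ hb => ⟨x, fun _ _ h => h, ha, hb⟩,
     fun _ _ hab hbx A hA ha => hbx A hA (hab A hA ha)⟩
  exact h _ hIdeal x ⟨fun _ hz => hz, fun _ hu => hu x fun _ _ h => h⟩ fun _ _ h => h

end OpenFilter

section Algebra

variable [TopologicalSpace X] {r : OF X → X}

lemma sOrd_of_subset (hc : Continuous r) {v w : OF X} (h : v.1 ⊆ w.1) :
    sOrd (r v) (r w) := by
  intro A hA hv
  obtain ⟨B, _, hBv, hBA⟩ := OF.exists_mem_phi_subset (hA.preimage hc) v hv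
  exact hBA (h hBv)

variable (hc : Continuous r) (hunit : ∀ x : X, r (etaOF x) = x)
include hc hunit

lemma sOrd_of_etaOF_subset {y : X} {v : OF X} (h : (etaOF y).1 ⊆ v.1) : sOrd y (r v) :=
  hunit y ▸ sOrd_of_subset hc h

lemma sOrd_of_subset_etaOF {u : X} {v : OF X} (h : v.1 ⊆ (etaOF u).1) : sOrd (r v) u :=
  hunit u ▸ sOrd_of_subset hc h

lemma OF.mem_of_r_mem (v : OF X) {A : Set X} (hA : IsOpen A) (h : r v ∈ A) : A ∈ v.1 := by
  obtain ⟨B, hB, hBv, hBA⟩ := OF.exists_mem_phi_subset (hA.preimage hc) v h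
  refine v.mem_of_subset hBv hA fun x hx => ?_
  simpa only [mem_preimage, hunit x] using hBA (show etaOF x ∈ phi B from ⟨hB, hx⟩)

lemma sOrd_r_of_mem_sDownOf (v : OF X) {y : X} (hy : y ∈ sDownOf v.1) : sOrd y (r v) := by
  obtain ⟨A, hAv, hAy⟩ := hy
  exact sOrd_of_etaOF_subset hc hunit fun B ⟨hB, hyB⟩ =>
    v.mem_of_subset hAv hB fun z hz => hAy z hz B hB hyB

lemma r_nbhdOF_mem_sDownOf (v : OF X) {A : Set X} (hAv : A ∈ v.1) :
    r (nbhdOF A) ∈ sDownOf v.1 :=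
  ⟨A, hAv, fun _ hz => sOrd_of_subset_etaOF hc hunit fun _ ⟨hC, hAC⟩ => ⟨hC, hAC hz⟩⟩

lemma isLUB_sDownOf (hassoc : ∀ α : OF (OF X), r (mapOF r hc α) = r (muOF α)) (v : OF X) :
    sIsLUB (sDownOf v.1) (r v) := by
  refine ⟨fun y hy => sOrd_r_of_mem_sDownOf hc hunit v hy, fun u hu => ?_⟩
  have hmap : (mapOF r hc (phiFilter v)).1 ⊆ (etaOF u).1 := by
    rintro B ⟨hB, _, A, hAv, hAB⟩
    have hrA : r (nbhdOF A) ∈ B := hAB ⟨v.2.1 A hAv, subset_rfl⟩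
    exact ⟨hB, hu _ (r_nbhdOF_mem_sDownOf hc hunit v hAv) B hB hrA⟩
  simpa only [hassoc, muOF_phiFilter] using sOrd_of_subset_etaOF hc hunit hmap

lemma sWayBelow_of_mem_sDownOf_etaOF {x y : X} (hy : y ∈ sDownOf (etaOF x).1) :
    sWayBelow y x := by
  obtain ⟨A, ⟨hA, hxA⟩, hAy⟩ := hy
  intro I hI s hs hxs
  set w := meetFilter I hI.1 hI.2.1
  have hsw : sOrd s (r w) := hs.2 (r w) fun a haI =>
    sOrd_of_etaOF_subset hc hunit fun B ⟨hB, haB⟩ => ⟨hB, a, haI, haB⟩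
  obtain ⟨_, z, hzI, hzA⟩ := w.mem_of_r_mem hc hunit hA (hsw A hA (hxs A hA hxA))
  exact hI.2.2 y z (hAy z hzA) hzI

end Algebra

theorem r_eq_sup_down_and_continuousLattice_general [TopologicalSpace X]
    (r : OF X → X) (hc : Continuous r)
    (hunit : ∀ x : X, r (etaOF x) = x)
    (hassoc : ∀ α : OF (OF X), r (mapOF r hc α) = r (muOF α)) :
    (∀ v : OF X, sIsLUB (sDownOf v.1) (r v)) ∧
    ∀ x : X, sIsLUB {y : X | sWayBelow y x} x := by
  have hLUB := isLUB_sDownOf hc hunit hassoc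
  refine ⟨hLUB, fun x => ⟨fun _ => sOrd_of_sWayBelow, fun u hu => ?_⟩⟩
  have hx := (hLUB (etaOF x)).2 u fun y hy =>
    hu y (sWayBelow_of_mem_sDownOf_etaOF hc hunit hy)
  rwa [hunit x] at hx

/-- for a `Φ`-algebra `(X, r)` over `T0` spaces, `r(v) = ⋁ v↓` in the
specialization order for every open filter `v`; consequently `X` with the
specialization order is a continuous lattice (every element is the sup of the
elements way below it). -/
theorem r_eq_sup_down_and_continuousLattice [TopologicalSpace X] [T0Space X]
    (r : OF X → X) (hc : Continuous r)
    (hunit : ∀ x : X, r (etaOF x) = x)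
    (hassoc : ∀ α : OF (OF X), r (mapOF r hc α) = r (muOF α)) :
    (∀ v : OF X, sIsLUB (sDownOf v.1) (r v)) ∧
    ∀ x : X, sIsLUB {y : X | sWayBelow y x} x :=
  r_eq_sup_down_and_continuousLattice_general r hc hunit hassoc
end
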